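/- Generalized Gronwall inequality with singular kernel: let φ : [0,T] → [0,∞) be bounded measurable, and suppose there exist constants a ≥ 0, b ≥ 0, r > 1 and β ∈ [0, 1/r) such that φ(t) ≤ a + b (∫_0^t (t−s)^{−βr} φ(s)^r ds)^{1/r} for all t ∈ [0,T], where βr < 1. Then there is a constant C = C(b, r, β, T) such that φ(t) ≤ C·a for all t ∈ [0,T]. -/

import Mathlib

/-!
Weight φ by `exp (-κ t)` (a Bielecki-type norm). If `exp (-κ s) φ s ≤ M` on `[0, T]`, then
`φ s ^ r ≤ M ^ r exp (κ r t) exp (-κ r (t - s))`, and extending the kernel integral to `(0, ∞)`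
turns it into a Gamma integral `Γ(1 - βr) (κ r)^(βr - 1)`, which tends to `0` as `κ → ∞`. For
large `κ` the hypothesis thus improves any weighted bound `M` to `a + M / 2`; applied to the
least weighted bound (finite since `φ` is bounded) this gives `M ≤ 2a`, i.e.
`φ t ≤ 2 exp (κ T) a`.
-/

open MeasureTheory Set Filter Real Topology

lemma setIntegral_Ioo_comp_sub_left {E : Type*} [NormedAddCommGroup E] [NormedSpace ℝ E]
    (F : ℝ → E) {t : ℝ} (ht : 0 ≤ t) :
    ∫ s in Ioo 0 t, F (t - s) = ∫ u in Ioo 0 t, F u := by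
  simp only [← integral_Ioc_eq_integral_Ioo, ← intervalIntegral.integral_of_le ht]
  simp [intervalIntegral.integral_comp_sub_left F t]

lemma integrableOn_rpow_mul_exp_neg_mul_Ioi {q μ : ℝ} (hq : -1 < q) (hμ : 0 < μ) :
    IntegrableOn (fun u : ℝ => u ^ q * exp (-(μ * u))) (Ioi 0) := by
  simpa [neg_mul] using integrableOn_rpow_mul_exp_neg_mul_rpow hq one_pos hμ

/-- `(∫₀^∞ u ^ q * exp (-κ r u) du) ^ (1 / r)`. -/
noncomputable def expWeightedKernelConst (q r κ : ℝ) : ℝ :=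
  ((1 / (κ * r)) ^ (q + 1) * Gamma (q + 1)) ^ (1 / r)

lemma tendsto_expWeightedKernelConst_atTop {q r : ℝ} (hq : -1 < q) (hr : 0 < r) :
    Tendsto (expWeightedKernelConst q r) atTop (𝓝 0) := by
  unfold expWeightedKernelConst
  have hinv : Tendsto (fun κ : ℝ => 1 / (κ * r)) atTop (𝓝 0) :=
    tendsto_const_nhds.div_atTop (tendsto_id.atTop_mul_const hr)
  have := ((hinv.rpow_const (p := q + 1) (Or.inr (by linarith))).mul_const
    (Gamma (q + 1))).rpow_const (Or.inr (by positivity : (0:ℝ) ≤ 1 / r))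
  simpa [zero_rpow (by linarith : q + 1 ≠ 0),
    zero_rpow (inv_ne_zero hr.ne')] using this

lemma setIntegral_kernel_mul_rpow_le {φ : ℝ → ℝ} {q r κ M t : ℝ} (hq : -1 < q) (hr : 0 < r)
    (hκ : 0 < κ) (hM : 0 ≤ M) (ht : 0 ≤ t) (hφ0 : ∀ s, 0 ≤ φ s)
    (hφM : ∀ s ∈ Ioo 0 t, φ s ≤ M * exp (κ * s)) :
    ∫ s in Ioo 0 t, (t - s) ^ q * φ s ^ r ≤
      (M * exp (κ * t)) ^ r * ((1 / (κ * r)) ^ (q + 1) * Gamma (q + 1)) := by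
  have hG := integrableOn_rpow_mul_exp_neg_mul_Ioi hq (mul_pos hκ hr)
  have hpos : ∀ u ∈ Ioi (0:ℝ), 0 ≤ u ^ q * exp (-(κ * r * u)) := fun u hu =>
    mul_nonneg (rpow_nonneg (le_of_lt hu) _) (exp_pos _).le
  calc ∫ s in Ioo 0 t, (t - s) ^ q * φ s ^ r
      = ∫ u in Ioo 0 t, u ^ q * φ (t - u) ^ r := by
        rw [← setIntegral_Ioo_comp_sub_left _ ht]; simp only [sub_sub_cancel]
    _ ≤ ∫ u in Ioo 0 t, (M * exp (κ * t)) ^ r * (u ^ q * exp (-(κ * r * u))) := by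
        refine integral_mono_of_nonneg ?_ ((hG.mono_set Ioo_subset_Ioi_self).const_mul _) ?_
        · exact ae_restrict_of_forall_mem measurableSet_Ioo fun u hu =>
            mul_nonneg (rpow_nonneg hu.1.le _) (rpow_nonneg (hφ0 _) _)
        · refine ae_restrict_of_forall_mem measurableSet_Ioo fun u hu => ?_
          have hweight : (M * exp (κ * (t - u))) ^ r = (M * exp (κ * t)) ^ r * exp (-(κ * r * u)) := by
            rw [show κ * (t - u) = κ * t + -(κ * u) by ring, exp_add, ← mul_assoc,
              mul_rpow (by positivity) (by positivity), ← exp_mul]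
            ring_nf
          calc u ^ q * φ (t - u) ^ r ≤ u ^ q * (M * exp (κ * (t - u))) ^ r := by
                gcongr
                · exact rpow_nonneg hu.1.le _
                · exact hφ0 _
                · exact hφM _ ⟨by linarith [hu.2], by linarith [hu.1]⟩
            _ = _ := by rw [hweight]; ring
    _ ≤ (M * exp (κ * t)) ^ r * ∫ u in Ioi 0, u ^ q * exp (-(κ * r * u)) := by
        rw [integral_const_mul]
        gcongr ?_ * ?_
        exact setIntegral_mono_set hG (ae_restrict_of_forall_mem measurableSet_Ioi hpos)
          Ioo_subset_Ioi_self.eventuallyLE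
    _ = _ := by
        rw [← integral_rpow_mul_exp_neg_mul_Ioi (by linarith) (mul_pos hκ hr), add_sub_cancel_right]

lemma rpow_setIntegral_kernel_mul_rpow_le {φ : ℝ → ℝ} {q r κ M t : ℝ} (hq : -1 < q) (hr : 0 < r)
    (hκ : 0 < κ) (hM : 0 ≤ M) (ht : 0 ≤ t) (hφ0 : ∀ s, 0 ≤ φ s)
    (hφM : ∀ s ∈ Ioo 0 t, φ s ≤ M * exp (κ * s)) :
    (∫ s in Ioo 0 t, (t - s) ^ q * φ s ^ r) ^ (1 / r) ≤
      expWeightedKernelConst q r κ * (M * exp (κ * t)) := by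
  have hI : 0 ≤ ∫ s in Ioo 0 t, (t - s) ^ q * φ s ^ r :=
    setIntegral_nonneg measurableSet_Ioo fun s hs =>
      mul_nonneg (rpow_nonneg (by linarith [hs.2]) _) (rpow_nonneg (hφ0 s) _)
  have hMt : 0 ≤ M * exp (κ * t) := by positivity
  calc (∫ s in Ioo 0 t, (t - s) ^ q * φ s ^ r) ^ (1 / r)
      ≤ ((M * exp (κ * t)) ^ r * ((1 / (κ * r)) ^ (q + 1) * Gamma (q + 1))) ^ (1 / r) :=
        rpow_le_rpow hI (setIntegral_kernel_mul_rpow_le hq hr hκ hM ht hφ0 hφM) (by positivity)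
    _ = _ := by
        rw [mul_rpow (by positivity) (mul_nonneg (by positivity) (Gamma_pos_of_pos (by linarith)).le),
          mul_comm, expWeightedKernelConst, one_div r, rpow_rpow_inv hMt hr.ne']

lemma forall_le_two_mul_of_bound_le_add_half {α : Type*} {s : Set α} {f : α → ℝ} {a : ℝ}
    (hf : BddAbove (f '' s)) (h : ∀ M, (∀ x ∈ s, f x ≤ M) → ∀ x ∈ s, f x ≤ a + M / 2) :
    ∀ x ∈ s, f x ≤ 2 * a := by
  rcases s.eq_empty_or_nonempty with rfl | hs
  · simp
  have hle : ∀ x ∈ s, f x ≤ sSup (f '' s) := fun x hx => le_csSup hf (mem_image_of_mem f hx)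
  have hsup : sSup (f '' s) ≤ a + sSup (f '' s) / 2 :=
    csSup_le (hs.image f) (forall_mem_image.2 (h _ hle))
  intro x hx
  linarith [hle x hx]

lemma exp_neg_mul_mul_le_add_half {φ : ℝ → ℝ} {T a b q r κ M : ℝ} (ha : 0 ≤ a) (hb : 0 ≤ b)
    (hq : -1 < q) (hr : 0 < r) (hκ : 0 < κ) (hκb : b * expWeightedKernelConst q r κ ≤ 1 / 2)
    (hφ0 : ∀ t, 0 ≤ φ t)
    (hφ : ∀ t ∈ Icc 0 T, φ t ≤ a + b * (∫ s in Ioo 0 t, (t - s) ^ q * φ s ^ r) ^ (1 / r))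
    (hM : ∀ t ∈ Icc 0 T, exp (-(κ * t)) * φ t ≤ M) :
    ∀ t ∈ Icc 0 T, exp (-(κ * t)) * φ t ≤ a + M / 2 := by
  intro t ht
  have hM0 : 0 ≤ M := (mul_nonneg (exp_pos _).le (hφ0 t)).trans (hM t ht)
  have hφM : ∀ s ∈ Ioo 0 t, φ s ≤ M * exp (κ * s) := fun s hs => by
    have := hM s ⟨hs.1.le, hs.2.le.trans ht.2⟩
    rwa [exp_neg, inv_mul_le_iff₀ (exp_pos _), mul_comm] at this
  have hbound : φ t ≤ a + M / 2 * exp (κ * t) := calc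
    φ t ≤ a + b * (∫ s in Ioo 0 t, (t - s) ^ q * φ s ^ r) ^ (1 / r) := hφ t ht
    _ ≤ a + b * (expWeightedKernelConst q r κ * (M * exp (κ * t))) := by
      gcongr
      exact rpow_setIntegral_kernel_mul_rpow_le hq hr hκ hM0 ht.1 hφ0 hφM
    _ ≤ a + 1 / 2 * (M * exp (κ * t)) := by rw [← mul_assoc]; gcongr
    _ = a + M / 2 * exp (κ * t) := by ring
  have hdecay : exp (-(κ * t)) ≤ 1 := exp_le_one_iff.2 (by nlinarith [ht.1])
  calc exp (-(κ * t)) * φ t ≤ exp (-(κ * t)) * (a + M / 2 * exp (κ * t)) := by gcongr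
    _ = exp (-(κ * t)) * a + M / 2 := by
      rw [mul_add, mul_left_comm, ← exp_add, neg_add_cancel, exp_zero, mul_one]
    _ ≤ a + M / 2 := by nlinarith

theorem stmt5_general (T b r β : ℝ) (hb : 0 ≤ b) (hr : 1 < r) (hβr : β * r < 1) :
    ∃ C > (0:ℝ), ∀ (φ : ℝ → ℝ) (a : ℝ), 0 ≤ a → Measurable φ → (∀ t, 0 ≤ φ t) →
      (∃ Mb : ℝ, ∀ t ∈ Set.Icc (0:ℝ) T, φ t ≤ Mb) →
      (∀ t ∈ Set.Icc (0:ℝ) T,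
        φ t ≤ a + b * (∫ s in Set.Ioo (0:ℝ) t, (t - s) ^ (-(β * r)) * φ s ^ r) ^ (1 / r)) →
      ∀ t ∈ Set.Icc (0:ℝ) T, φ t ≤ C * a := by
  have hr0 : 0 < r := by linarith
  have hq : -1 < -(β * r) := by linarith
  have hsmall : Tendsto (fun κ => b * expWeightedKernelConst (-(β * r)) r κ) atTop (𝓝 0) := by
    simpa using (tendsto_expWeightedKernelConst_atTop hq hr0).const_mul b
  obtain ⟨κ, hκb, hκ⟩ := ((hsmall.eventually (eventually_le_nhds (by norm_num : (0:ℝ) < 1 / 2))).and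
    (eventually_gt_atTop 0)).exists
  refine ⟨2 * exp (κ * T), by positivity, fun φ a ha _ hφ0 ⟨Mb, hMb⟩ hφ t ht => ?_⟩
  have hbdd : BddAbove ((fun t => exp (-(κ * t)) * φ t) '' Icc 0 T) :=
    ⟨Mb, forall_mem_image.2 fun s hs =>
      (mul_le_of_le_one_left (hφ0 s) (exp_le_one_iff.2 (by nlinarith [hs.1]))).trans (hMb s hs)⟩
  have hweighted := forall_le_two_mul_of_bound_le_add_half hbdd
    (fun M hM => exp_neg_mul_mul_le_add_half ha hb hq hr0 hκ hκb hφ0 hφ hM) t ht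
  calc φ t = exp (κ * t) * (exp (-(κ * t)) * φ t) := by
        rw [← mul_assoc, ← exp_add, add_neg_cancel, exp_zero, one_mul]
    _ ≤ exp (κ * T) * (2 * a) :=
        mul_le_mul (exp_le_exp.2 (by nlinarith [ht.2])) hweighted
          (mul_nonneg (exp_pos _).le (hφ0 t)) (exp_pos _).le
    _ = 2 * exp (κ * T) * a := by ring

/-- Generalized Gronwall inequality with singular kernel: if a bounded measurable
nonnegative `φ` satisfies `φ(t) ≤ a + b (∫_0^t (t-s)^{-βr} φ(s)^r ds)^{1/r}` on `[0,T]`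
with `r > 1`, `0 ≤ β` and `βr < 1`, then `φ(t) ≤ C a` for a constant `C = C(b,r,β,T)`. -/
theorem stmt5 (T b r β : ℝ) (hT : 0 < T) (hb : 0 ≤ b) (hr : 1 < r)
    (hβ0 : 0 ≤ β) (hβr : β * r < 1) :
    ∃ C > (0:ℝ), ∀ (φ : ℝ → ℝ) (a : ℝ), 0 ≤ a → Measurable φ → (∀ t, 0 ≤ φ t) →
      (∃ Mb : ℝ, ∀ t ∈ Set.Icc (0:ℝ) T, φ t ≤ Mb) →
      (∀ t ∈ Set.Icc (0:ℝ) T,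
        φ t ≤ a + b * (∫ s in Set.Ioo (0:ℝ) t, (t - s) ^ (-(β * r)) * φ s ^ r) ^ (1 / r)) →
      ∀ t ∈ Set.Icc (0:ℝ) T, φ t ≤ C * a :=
  stmt5_general T b r β hb hr hβr
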